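/- arXiv:1411.5262 — 3 statements merged into one kernel-verified Lean document; each statement's English description precedes it below -/
import Mathlib

section
/- If w(z) satisfies z(1−z)w'' + (2b+1 − (a+b+1)z)w' − abw = 0 and y(x) is defined by w(4x/(1+x)²) = (1+x)^{2a} y(x), then y satisfies x(1−x²)y'' + (2b+1 + 2x − (4a−2b+1)x²)y' + 2a(1 + 2(b−a)x)y = 0. -/
/-!
Differentiate the relation `w (g x) = (1 + x) ^ (2 * a) * y x`, with `g x = 4 x / (1 + x) ^ 2`,
twice by the chain rule. Since the relation is only assumed for `|x| < 1`, both differentiations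
use that it holds on a neighbourhood of every point with `|x| < 1` and `|g x| < 1`. Substituting
`w (g x)`, `w' (g x)` and `w'' (g x)` into the hypergeometric equation at `z = g x` leaves
`(1 + x) ^ (2 * a)` times the transformed equation.
-/

open scoped Nat

/-- Pochhammer symbol (rising factorial). -/
noncomputable def poch (a : ℝ) (n : ℕ) : ℝ := (ascPochhammer ℝ n).eval a

/-- Gauss hypergeometric series ₂F₁(a,b;c;z). -/
noncomputable def F (a b c z : ℝ) : ℝ :=
  ∑' n : ℕ, poch a n * poch b n / (poch c n * (n ! : ℝ)) * z ^ n

open Filter Topology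

noncomputable def quadSubst (x : ℝ) : ℝ := 4 * x / (1 + x) ^ 2

section Derivatives

variable {x : ℝ}

lemma hasDerivAt_one_add : HasDerivAt (fun u : ℝ => 1 + u) 1 x := by
  simpa using (hasDerivAt_id' x).const_add 1

lemma hasDerivAt_quadSubst (hx : 1 + x ≠ 0) :
    HasDerivAt quadSubst (4 * (1 - x) / (1 + x) ^ 3) x := by
  have h := ((hasDerivAt_id' x).const_mul 4).fun_div (hasDerivAt_one_add.fun_pow 2)
    (pow_ne_zero 2 hx)
  refine h.congr_deriv ?_
  field_simp
  ring

lemma hasDerivAt_deriv_quadSubst (hx : 1 + x ≠ 0) :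
    HasDerivAt (fun u => 4 * (1 - u) / (1 + u) ^ 3) (8 * (x - 2) / (1 + x) ^ 4) x := by
  have h := (((hasDerivAt_id' x).const_sub 1).const_mul 4).fun_div
    (hasDerivAt_one_add.fun_pow 3) (pow_ne_zero 3 hx)
  refine h.congr_deriv ?_
  field_simp
  ring

lemma hasDerivAt_one_add_rpow_mul (p : ℝ) {f : ℝ → ℝ} {f' : ℝ} (hf : HasDerivAt f f' x)
    (hx : 1 + x ≠ 0) :
    HasDerivAt (fun u => (1 + u) ^ p * f u)
      (p * (1 + x) ^ (p - 1) * f x + (1 + x) ^ p * f') x := by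
  simpa using (hasDerivAt_one_add.rpow_const (Or.inl hx)).fun_mul hf

lemma hasDerivAt_deriv_one_add_rpow_mul (p : ℝ) {f : ℝ → ℝ} (hf : DifferentiableAt ℝ f x)
    (hf' : DifferentiableAt ℝ (deriv f) x) (hx : 1 + x ≠ 0) :
    HasDerivAt (fun u => p * (1 + u) ^ (p - 1) * f u + (1 + u) ^ p * deriv f u)
      (p * ((p - 1) * (1 + x) ^ (p - 1 - 1) * f x + (1 + x) ^ (p - 1) * deriv f x)
        + (p * (1 + x) ^ (p - 1) * deriv f x + (1 + x) ^ p * deriv (deriv f) x)) x := by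
  have h := ((hasDerivAt_one_add_rpow_mul (p - 1) hf.hasDerivAt hx).const_mul p).fun_add
    (hasDerivAt_one_add_rpow_mul p hf'.hasDerivAt hx)
  exact h.congr_of_eventuallyEq (.of_forall fun u => by ring)

end Derivatives

section ChainRule

variable {p x : ℝ} {w y : ℝ → ℝ}

lemma deriv_comp_quadSubst_mul_eq_of_eventuallyEq (hw : DifferentiableAt ℝ w (quadSubst x))
    (hy : DifferentiableAt ℝ y x) (hx : 1 + x ≠ 0)
    (hrel : ∀ᶠ u in 𝓝 x, w (quadSubst u) = (1 + u) ^ p * y u) :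
    deriv w (quadSubst x) * (4 * (1 - x) / (1 + x) ^ 3)
      = p * (1 + x) ^ (p - 1) * y x + (1 + x) ^ p * deriv y x :=
  (((hasDerivAt_one_add_rpow_mul p hy.hasDerivAt hx).congr_of_eventuallyEq hrel).unique
    (hw.hasDerivAt.comp x (hasDerivAt_quadSubst hx))).symm

lemma deriv_deriv_comp_quadSubst_eq_of_eventuallyEq
    (hw : DifferentiableAt ℝ (deriv w) (quadSubst x)) (hy : DifferentiableAt ℝ y x)
    (hy' : DifferentiableAt ℝ (deriv y) x) (hx : 1 + x ≠ 0)
    (hrel : ∀ᶠ u in 𝓝 x, deriv w (quadSubst u) * (4 * (1 - u) / (1 + u) ^ 3)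
      = p * (1 + u) ^ (p - 1) * y u + (1 + u) ^ p * deriv y u) :
    deriv (deriv w) (quadSubst x) * (4 * (1 - x) / (1 + x) ^ 3) * (4 * (1 - x) / (1 + x) ^ 3)
        + deriv w (quadSubst x) * (8 * (x - 2) / (1 + x) ^ 4)
      = p * ((p - 1) * (1 + x) ^ (p - 1 - 1) * y x + (1 + x) ^ (p - 1) * deriv y x)
        + (p * (1 + x) ^ (p - 1) * deriv y x + (1 + x) ^ p * deriv (deriv y) x) :=
  (((hasDerivAt_deriv_one_add_rpow_mul p hy hy' hx).congr_of_eventuallyEq hrel).unique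
    ((hw.hasDerivAt.comp x (hasDerivAt_quadSubst hx)).fun_mul
      (hasDerivAt_deriv_quadSubst hx))).symm

end ChainRule

lemma eventually_abs_lt_one_and_abs_quadSubst_lt_one {x : ℝ} (hx : |x| < 1)
    (hz : |quadSubst x| < 1) : ∀ᶠ u in 𝓝 x, |u| < 1 ∧ |quadSubst u| < 1 := by
  have hx₀ : 1 + x ≠ 0 := by linarith [(abs_lt.mp hx).1]
  exact (continuous_abs.continuousAt.eventually_lt continuousAt_const hx).and
    ((continuous_abs.continuousAt.comp (hasDerivAt_quadSubst hx₀).continuousAt).eventually_lt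
      continuousAt_const hz)

lemma transformed_ode_of_derivs {a b x P y₀ y₁ y₂ w₁ w₂ : ℝ} (hx : 1 + x ≠ 0) (hP : P ≠ 0)
    (h₁ : w₁ * (4 * (1 - x) / (1 + x) ^ 3) = 2 * a * (P / (1 + x)) * y₀ + P * y₁)
    (h₂ : w₂ * (4 * (1 - x) / (1 + x) ^ 3) * (4 * (1 - x) / (1 + x) ^ 3)
        + w₁ * (8 * (x - 2) / (1 + x) ^ 4)
      = 2 * a * ((2 * a - 1) * (P / (1 + x) / (1 + x)) * y₀ + P / (1 + x) * y₁)
        + (2 * a * (P / (1 + x)) * y₁ + P * y₂))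
    (h₃ : quadSubst x * (1 - quadSubst x) * w₂
        + (2 * b + 1 - (a + b + 1) * quadSubst x) * w₁ - a * b * (P * y₀) = 0) :
    x * (1 - x ^ 2) * y₂ + (2 * b + 1 + 2 * x - (4 * a - 2 * b + 1) * x ^ 2) * y₁
      + 2 * a * (1 + 2 * (b - a) * x) * y₀ = 0 := by
  refine mul_left_cancel₀ hP ?_
  unfold quadSubst at h₃
  -- the multiple of `h₃` eliminates `w₂` from `h₂`, the multiple of `h₁` then eliminates `w₁`
  linear_combination (norm := (field_simp; ring)) (-(x * (1 - x) * (1 + x))) * h₂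
    + (4 * (1 - x) / (1 + x)) * h₃
    - ((2 * b + 1) * (1 + x) ^ 2 - 4 * (a + b + 1) * x - 2 * x * (x - 2)) * h₁

theorem ode_transform_c_eq_2b_add_one (a b : ℝ) (w y : ℝ → ℝ)
    (hw : ∀ z : ℝ, |z| < 1 → DifferentiableAt ℝ w z ∧ DifferentiableAt ℝ (deriv w) z)
    (hy : ∀ x : ℝ, |x| < 1 → DifferentiableAt ℝ y x ∧ DifferentiableAt ℝ (deriv y) x)
    (hode : ∀ z : ℝ, |z| < 1 →
      z * (1 - z) * deriv (deriv w) z + (2 * b + 1 - (a + b + 1) * z) * deriv w z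
        - a * b * w z = 0)
    (hrel : ∀ x : ℝ, |x| < 1 → w (4 * x / (1 + x) ^ 2) = (1 + x) ^ (2 * a) * y x) :
    ∀ x : ℝ, |x| < 1 → |4 * x / (1 + x) ^ 2| < 1 →
      x * (1 - x ^ 2) * deriv (deriv y) x
        + (2 * b + 1 + 2 * x - (4 * a - 2 * b + 1) * x ^ 2) * deriv y x
        + 2 * a * (1 + 2 * (b - a) * x) * y x = 0 := by
  have one_add_pos : ∀ {u : ℝ}, |u| < 1 → 0 < 1 + u := fun hu => by
    linarith [(abs_lt.mp hu).1]
  intro x hx (hz : |quadSubst x| < 1)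
  have first : ∀ᶠ u in 𝓝 x, deriv w (quadSubst u) * (4 * (1 - u) / (1 + u) ^ 3)
      = 2 * a * (1 + u) ^ (2 * a - 1) * y u + (1 + u) ^ (2 * a) * deriv y u :=
    (eventually_abs_lt_one_and_abs_quadSubst_lt_one hx hz).mono fun u hu =>
      deriv_comp_quadSubst_mul_eq_of_eventuallyEq (hw _ hu.2).1 (hy u hu.1).1
        (one_add_pos hu.1).ne'
        ((continuous_abs.continuousAt.eventually_lt continuousAt_const hu.1).mono hrel)
  have second := deriv_deriv_comp_quadSubst_eq_of_eventuallyEq (hw _ hz).2 (hy x hx).1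
    (hy x hx).2 (one_add_pos hx).ne' first
  have third := hode _ hz
  rw [show w (quadSubst x) = _ from hrel x hx] at third
  have h₁ := first.self_of_nhds
  simp only [Real.rpow_sub_one (one_add_pos hx).ne'] at h₁ second
  exact transformed_ode_of_derivs (one_add_pos hx).ne'
    (Real.rpow_pos_of_pos (one_add_pos hx) _).ne' h₁ second third
end

section
/- Let a, b be parameters with 2b+1 not zero or a negative integer. Define c₀ = 1, c₁ = −2a/(2b+1), and for n ≥ 2, cₙ = [ (n+2(a−1))(n+2(a−b−1)) c_{n−2} − 2(n+a−1) c_{n−1} ] / (n(n+2b)). Then for all n ≥ 0, c_{2n} = (a)_n (a−b+1/2)_n / (n! (b+1/2)_n) and c_{2n+1} = c₁ · (a+1)_n (a−b+1/2)_n / (n! (b+3/2)_n). -/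
open scoped Nat

/-
The claimed closed forms have simple consecutive ratios,
  c_{2n+1} / c_{2n} = -(2a + 2n) / (2b + 2n + 1),   c_{2n+2} / c_{2n+1} = -(2a - 2b + 2n + 1) / (2n + 2),
so substituting them into the three-term recurrence reduces each step to a rational-function
identity in n. An induction on n carrying the even and the odd coefficient together then
identifies c with the closed forms.
-/

lemma poch_zero (x : ℝ) : poch x 0 = 1 := by simp [poch]

lemma poch_succ (x : ℝ) (n : ℕ) : poch x (n + 1) = poch x n * (x + n) := by
  simp [poch, ascPochhammer_succ_eval]

lemma poch_succ_left (x : ℝ) (n : ℕ) : poch x (n + 1) = x * poch (x + 1) n := by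
  simp [poch, ascPochhammer_succ_left, Polynomial.eval_comp]

lemma mul_poch_add_one (x : ℝ) (n : ℕ) : x * poch (x + 1) n = poch x n * (x + n) := by
  rw [← poch_succ_left, poch_succ]

lemma poch_ne_zero {x : ℝ} (h : ∀ k : ℕ, x + k ≠ 0) (n : ℕ) : poch x n ≠ 0 := by
  induction n with
  | zero => simp [poch_zero]
  | succ n ih => rw [poch_succ]; exact mul_ne_zero ih (h n)

noncomputable def frobeniusStep (a b : ℝ) (n : ℕ) (x y : ℝ) : ℝ :=
  (((n : ℝ) + 2 * (a - 1)) * ((n : ℝ) + 2 * (a - b - 1)) * x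
    - 2 * ((n : ℝ) + a - 1) * y) / ((n : ℝ) * ((n : ℝ) + 2 * b))

noncomputable def evenCoeff (a b : ℝ) (n : ℕ) : ℝ :=
  poch a n * poch (a - b + 1/2) n / ((n ! : ℝ) * poch (b + 1/2) n)

noncomputable def oddCoeff (a b : ℝ) (n : ℕ) : ℝ :=
  -2 * a / (2 * b + 1) * (poch (a + 1) n * poch (a - b + 1/2) n / ((n ! : ℝ) * poch (b + 3/2) n))

section ClosedForms

variable {a b : ℝ} (hb : ∀ k : ℕ, 2 * b + 1 + (k : ℝ) ≠ 0)
include hb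

lemma poch_add_half_ne_zero (n : ℕ) : poch (b + 1/2) n ≠ 0 :=
  poch_ne_zero (fun k h => hb (2 * k) (by push_cast; linarith)) n

lemma poch_add_three_halves_ne_zero (n : ℕ) : poch (b + 3/2) n ≠ 0 :=
  poch_ne_zero (fun k h => hb (2 * k + 2) (by push_cast; linarith)) n

lemma oddCoeff_eq_mul_evenCoeff (n : ℕ) :
    oddCoeff a b n = -(2 * a + 2 * n) / (2 * b + 2 * n + 1) * evenCoeff a b n := by
  have hpa := mul_poch_add_one a n
  have hpb := mul_poch_add_one (b + 1/2) n
  rw [show b + 1/2 + 1 = b + 3/2 by ring] at hpb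
  have h0 : 2 * b + 1 ≠ 0 := by simpa using hb 0
  have hn : 2 * (b + n) + 1 ≠ 0 := fun h => hb (2 * n) (by push_cast; linarith)
  have hB := poch_add_half_ne_zero hb n
  have hB' := poch_add_three_halves_ne_zero hb n
  unfold oddCoeff evenCoeff
  generalize poch a n = A, poch (a + 1) n = A', poch (b + 1/2) n = B, poch (b + 3/2) n = B',
    poch (a - b + 1/2) n = C at *
  field_simp
  linear_combination (2 * C * A * (a + n)) * hpb - (C * B * (2 * (b + n) + 1)) * hpa

lemma evenCoeff_succ (n : ℕ) :
    evenCoeff a b (n + 1) = -(2 * a - 2 * b + 2 * n + 1) / (2 * n + 2) * oddCoeff a b n := by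
  have hB' := poch_add_three_halves_ne_zero hb n
  unfold oddCoeff evenCoeff
  rw [poch_succ_left a, poch_succ _ n, poch_succ_left (b + 1/2), Nat.factorial_succ,
    show b + 1/2 + 1 = b + 3/2 by ring]
  generalize poch (a + 1) n = A', poch (b + 3/2) n = B', poch (a - b + 1/2) n = C at *
  field_simp
  push_cast
  ring

lemma evenCoeff_succ_eq_frobeniusStep (n : ℕ) :
    evenCoeff a b (n + 1) = frobeniusStep a b (2 * n + 2) (evenCoeff a b n) (oddCoeff a b n) := by
  have h1 : 2 * (b + n) + 1 ≠ 0 := fun h => hb (2 * n) (by push_cast; linarith)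
  have h2 : ((2 * n + 2 : ℕ) : ℝ) + 2 * b ≠ 0 := fun h => hb (2 * n + 1) (by push_cast at h ⊢; linarith)
  rw [evenCoeff_succ hb, oddCoeff_eq_mul_evenCoeff hb]
  generalize evenCoeff a b n = e
  unfold frobeniusStep
  rw [eq_div_iff (mul_ne_zero (by positivity) h2)]
  push_cast
  field_simp
  ring

lemma oddCoeff_succ_eq_frobeniusStep (n : ℕ) :
    oddCoeff a b (n + 1) =
      frobeniusStep a b (2 * n + 3) (oddCoeff a b n) (evenCoeff a b (n + 1)) := by
  have h1 : 2 * (b + (n + 1)) + 1 ≠ 0 := fun h => hb (2 * n + 2) (by push_cast; linarith)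
  have h2 : ((2 * n + 3 : ℕ) : ℝ) + 2 * b ≠ 0 := fun h => hb (2 * n + 2) (by push_cast at h ⊢; linarith)
  rw [oddCoeff_eq_mul_evenCoeff hb (n + 1), evenCoeff_succ hb]
  generalize oddCoeff a b n = o
  unfold frobeniusStep
  rw [eq_div_iff (mul_ne_zero (by positivity) h2)]
  push_cast
  field_simp
  ring

end ClosedForms

theorem frobenius_coeffs_lambda_zero (a b : ℝ) (hb : ∀ k : ℕ, 2 * b + 1 + (k : ℝ) ≠ 0)
    (c : ℕ → ℝ) (hc0 : c 0 = 1) (hc1 : c 1 = -2 * a / (2 * b + 1))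
    (hrec : ∀ n : ℕ, 2 ≤ n → c n =
      (((n : ℝ) + 2 * (a - 1)) * ((n : ℝ) + 2 * (a - b - 1)) * c (n - 2)
        - 2 * ((n : ℝ) + a - 1) * c (n - 1)) / ((n : ℝ) * ((n : ℝ) + 2 * b))) :
    ∀ n : ℕ,
      c (2 * n) = poch a n * poch (a - b + 1/2) n / ((n ! : ℝ) * poch (b + 1/2) n) ∧
      c (2 * n + 1) =
        c 1 * (poch (a + 1) n * poch (a - b + 1/2) n / ((n ! : ℝ) * poch (b + 3/2) n)) := by
  have step (m : ℕ) : c (m + 2) = frobeniusStep a b (m + 2) (c m) (c (m + 1)) := by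
    have h := hrec (m + 2) (by omega)
    rwa [Nat.add_sub_cancel, show m + 2 - 1 = m + 1 by omega] at h
  have closed (n : ℕ) : c (2 * n) = evenCoeff a b n ∧ c (2 * n + 1) = oddCoeff a b n := by
    induction n with
    | zero => simp [evenCoeff, oddCoeff, poch_zero, hc0, hc1]
    | succ n ih =>
      have heven : c (2 * (n + 1)) = evenCoeff a b (n + 1) := by
        rw [evenCoeff_succ_eq_frobeniusStep hb, ← ih.1, ← ih.2]
        exact step (2 * n)
      refine ⟨heven, ?_⟩
      rw [oddCoeff_succ_eq_frobeniusStep hb, ← ih.2, ← heven]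
      exact step (2 * n + 1)
  intro n
  rw [hc1]
  exact closed n
end

section
/- If w(z) satisfies z(1−z)w'' + (2b−1 − (a+b+1)z)w' − abw = 0 and y(x) is defined by w(4x/(1+x)²) = (1+x)^{2a} y(x), then y satisfies x(1−x²)y'' + (2b−1 − 2x − (4a−2b+3)x²)y' − 2a(1 + 2(a−b+1)x)y = 0. -/
open scoped Nat

/-!
Near a point `x` with `|x| < 1` and `|z(x)| < 1`, where `z(t) = 4t/(1+t)²`, the relation reads
`y = k · (w ∘ z)` with `k(t) = (1+t)^(-2a)`. Differentiating this product twice expresses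
`y, y', y''` at `x` through `w, w', w''` at `z(x)`. Substituting, the left-hand side of the
transformed equation becomes `4(1-x)/(1+x) · k(x)` times the hypergeometric operator applied to `w` at `z(x)`, which vanishes.
-/

open Filter Topology

section SecondDerivative

variable {𝕜 : Type*} [NontriviallyNormedField 𝕜] {k k' g g' w : 𝕜 → 𝕜} {x k'' g'' : 𝕜}

theorem hasDerivAt_mul_comp {kx gx : 𝕜} (hk : HasDerivAt k kx x) (hg : HasDerivAt g gx x)
    (hw : DifferentiableAt 𝕜 w (g x)) :
    HasDerivAt (fun t => k t * w (g t)) (kx * w (g x) + k x * deriv w (g x) * gx) x := by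
  have hwg : HasDerivAt (fun t => w (g t)) (deriv w (g x) * gx) x := hw.hasDerivAt.comp x hg
  exact (hk.fun_mul hwg).congr_deriv (by ring)

theorem hasDerivAt_deriv_mul_comp (hk : ∀ᶠ t in 𝓝 x, HasDerivAt k (k' t) t)
    (hk' : HasDerivAt k' k'' x) (hg : ∀ᶠ t in 𝓝 x, HasDerivAt g (g' t) t)
    (hg' : HasDerivAt g' g'' x) (hw : ∀ᶠ t in 𝓝 x, DifferentiableAt 𝕜 w (g t))
    (hw' : DifferentiableAt 𝕜 (deriv w) (g x)) :
    HasDerivAt (deriv fun t => k t * w (g t))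
      (k'' * w (g x) + 2 * k' x * deriv w (g x) * g' x
        + k x * (deriv (deriv w) (g x) * g' x ^ 2 + deriv w (g x) * g'')) x := by
  have hderiv : (deriv fun t => k t * w (g t))
      =ᶠ[𝓝 x] fun t => k' t * w (g t) + k t * deriv w (g t) * g' t := by
    filter_upwards [hk, hg, hw] with t hkt hgt hwt
    exact (hasDerivAt_mul_comp hkt hgt hwt).deriv
  have hgx := hg.self_of_nhds
  refine HasDerivAt.congr_of_eventuallyEq ?_ hderiv
  have hw'g : HasDerivAt (fun t => deriv w (g t)) (deriv (deriv w) (g x) * g' x) x :=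
    hw'.hasDerivAt.comp x hgx
  exact ((hasDerivAt_mul_comp hk' hgx hw.self_of_nhds).add
    ((hk.self_of_nhds.fun_mul hw'g).fun_mul hg')).congr_deriv (by ring)

end SecondDerivative

theorem hasDerivAt_four_mul_div_one_add_sq {x : ℝ} (hx : 1 + x ≠ 0) :
    HasDerivAt (fun t : ℝ => 4 * t / (1 + t) ^ 2) (4 * (1 - x) / (1 + x) ^ 3) x :=
  (((hasDerivAt_id' x).const_mul 4).fun_div (((hasDerivAt_id' x).const_add 1).fun_pow 2)
    (pow_ne_zero 2 hx)).congr_deriv (by field_simp; ring)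

theorem hasDerivAt_four_mul_one_sub_div_one_add_pow_three {x : ℝ} (hx : 1 + x ≠ 0) :
    HasDerivAt (fun t : ℝ => 4 * (1 - t) / (1 + t) ^ 3) (8 * (x - 2) / (1 + x) ^ 4) x :=
  ((((hasDerivAt_id' x).const_sub 1).const_mul 4).fun_div
    (((hasDerivAt_id' x).const_add 1).fun_pow 3) (pow_ne_zero 3 hx)).congr_deriv
    (by field_simp; ring)

theorem hasDerivAt_one_add_rpow (p : ℝ) {x : ℝ} (hx : 0 < 1 + x) :
    HasDerivAt (fun t : ℝ => (1 + t) ^ p) (p * (1 + x) ^ (p - 1)) x := by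
  simpa using ((hasDerivAt_id x).const_add 1).rpow_const (p := p) (Or.inl hx.ne')

theorem eventuallyEq_rpow_neg_mul_of_eq_rpow_mul {p x : ℝ} {u y : ℝ → ℝ}
    (hrel : ∀ t : ℝ, |t| < 1 → u t = (1 + t) ^ p * y t) (hx : |x| < 1) :
    y =ᶠ[𝓝 x] fun t => (1 + t) ^ (-p) * u t := by
  filter_upwards [(isOpen_lt continuous_abs continuous_const).mem_nhds hx] with t ht
  have h1t : 0 < 1 + t := by linarith [(abs_lt.mp ht).1]
  rw [hrel t ht, ← mul_assoc, ← Real.rpow_add h1t, neg_add_cancel, Real.rpow_zero, one_mul]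

theorem ode_transform_c_eq_2b_sub_one_general (a b : ℝ) (w y : ℝ → ℝ)
    (hw : ∀ z : ℝ, |z| < 1 → DifferentiableAt ℝ w z ∧ DifferentiableAt ℝ (deriv w) z)
    (hode : ∀ z : ℝ, |z| < 1 →
      z * (1 - z) * deriv (deriv w) z + (2 * b - 1 - (a + b + 1) * z) * deriv w z
        - a * b * w z = 0)
    (hrel : ∀ x : ℝ, |x| < 1 → w (4 * x / (1 + x) ^ 2) = (1 + x) ^ (2 * a) * y x) :
    ∀ x : ℝ, |x| < 1 → |4 * x / (1 + x) ^ 2| < 1 →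
      x * (1 - x ^ 2) * deriv (deriv y) x
        + (2 * b - 1 - 2 * x - (4 * a - 2 * b + 3) * x ^ 2) * deriv y x
        - 2 * a * (1 + 2 * (a - b + 1) * x) * y x = 0 := by
  intro x hx hz
  have h1x : 0 < 1 + x := by linarith [(abs_lt.mp hx).1]
  have hpos : ∀ᶠ t in 𝓝 x, 0 < 1 + t :=
    (eventually_gt_nhds (show -1 < x by linarith)).mono fun t ht => by linarith
  have hy := eventuallyEq_rpow_neg_mul_of_eq_rpow_mul hrel hx
  have hk : ∀ᶠ t in 𝓝 x, HasDerivAt (fun s : ℝ => (1 + s) ^ (-(2 * a)))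
      (-(2 * a) * (1 + t) ^ (-(2 * a) - 1)) t :=
    hpos.mono fun t ht => hasDerivAt_one_add_rpow _ ht
  have hg : ∀ᶠ t in 𝓝 x, HasDerivAt (fun s : ℝ => 4 * s / (1 + s) ^ 2)
      (4 * (1 - t) / (1 + t) ^ 3) t :=
    hpos.mono fun t ht => hasDerivAt_four_mul_div_one_add_sq ht.ne'
  have hwg : ∀ᶠ t in 𝓝 x, DifferentiableAt ℝ w (4 * t / (1 + t) ^ 2) :=
    (hg.self_of_nhds.continuousAt.abs.eventually_lt continuousAt_const hz).mono
      fun t ht => (hw _ ht).1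
  rw [hy.deriv.deriv_eq, hy.deriv_eq, hy.self_of_nhds,
    (hasDerivAt_mul_comp hk.self_of_nhds hg.self_of_nhds hwg.self_of_nhds).deriv,
    (hasDerivAt_deriv_mul_comp hk ((hasDerivAt_one_add_rpow _ h1x).const_mul _) hg
      (hasDerivAt_four_mul_one_sub_div_one_add_pow_three h1x.ne') hwg (hw _ hz).2).deriv]
  simp only [Real.rpow_sub_one h1x.ne']
  have hodez := hode _ hz
  set K := (1 + x) ^ (-(2 * a))
  set z := 4 * x / (1 + x) ^ 2 with hz_def
  calc _ = 4 * (1 - x) / (1 + x) * K * (z * (1 - z) * deriv (deriv w) z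
        + (2 * b - 1 - (a + b + 1) * z) * deriv w z - a * b * w z) := by
        rw [hz_def]
        field_simp
        ring
    _ = 0 := by rw [hodez, mul_zero]

theorem ode_transform_c_eq_2b_sub_one (a b : ℝ) (w y : ℝ → ℝ)
    (hw : ∀ z : ℝ, |z| < 1 → DifferentiableAt ℝ w z ∧ DifferentiableAt ℝ (deriv w) z)
    (hy : ∀ x : ℝ, |x| < 1 → DifferentiableAt ℝ y x ∧ DifferentiableAt ℝ (deriv y) x)
    (hode : ∀ z : ℝ, |z| < 1 →
      z * (1 - z) * deriv (deriv w) z + (2 * b - 1 - (a + b + 1) * z) * deriv w z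
        - a * b * w z = 0)
    (hrel : ∀ x : ℝ, |x| < 1 → w (4 * x / (1 + x) ^ 2) = (1 + x) ^ (2 * a) * y x) :
    ∀ x : ℝ, |x| < 1 → |4 * x / (1 + x) ^ 2| < 1 →
      x * (1 - x ^ 2) * deriv (deriv y) x
        + (2 * b - 1 - 2 * x - (4 * a - 2 * b + 3) * x ^ 2) * deriv y x
        - 2 * a * (1 + 2 * (a - b + 1) * x) * y x = 0 :=
  ode_transform_c_eq_2b_sub_one_general a b w y hw hode hrel
end
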